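/- arXiv:2102.12453 — 3 statements merged into one kernel-verified Lean document; each statement's English description precedes it below -/
import Mathlib

section
/- Let G be a 2-graph. Define the cell set 𝒫_G = V_G ∪ (E_G ∪ E^ext_G) ∪ F_G, where E^ext_G = {{h} : h external} and F_G is the set of faces, with dimension 0 on vertices, 1 on (external) edges, 2 on faces, and the relation: v < e iff some h ∈ e has ν(h) = v; e < f iff some h ∈ e and some s occurring in f have μ(s) = h; v < f iff there is an e with v < e < f. Then < generates a partial order on 𝒫_G satisfying the complex property (CP): whenever c > c'' and dim(c) − dim(c'') > 1, there exists a cell c' with c > c' > c''; moreover the complex is pure: every cell of nonzero dimension has a 0-cell below it. -/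
/-- A 2-graph: vertices `V`, half-edges `H`, strand sections `S`, adjacency maps
`nu : H → V` and `mu : S → H`, an involution `iota` on half-edges (whose two-element
orbits are the edges and whose fixed points are the external half-edges), a
fixed-point-free involution `s1` pairing strand sections at a common vertex, and an
involution `s2` pairing strands along edges. -/
structure TwoGraph : Type 1 where
  V : Type
  H : Type
  S : Type
  [fintV : Fintype V]
  [fintH : Fintype H]
  [fintS : Fintype S]
  nu : H → V
  mu : S → H
  iota : H → H
  s1 : S → S
  s2 : S → S
  iota_invol : ∀ h, iota (iota h) = h
  s1_invol : ∀ s, s1 (s1 s) = s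
  s1_nofix : ∀ s, s1 s ≠ s
  s1_adj : ∀ s, nu (mu (s1 s)) = nu (mu s)
  s2_invol : ∀ s, s2 (s2 s) = s
  s2_edge : ∀ s, iota (mu s) = mu (s2 s)
  s2_fix : ∀ s, s2 s = s ↔ iota (mu s) = mu s

attribute [instance] TwoGraph.fintV TwoGraph.fintH TwoGraph.fintS

namespace TwoGraph

variable (G : TwoGraph)

/-- Half-edges modulo the edge involution `ι`: the (internal and external) edges
`E_G ∪ E^ext_G` of the 2-graph. -/
def edgeSetoid : Setoid G.H := Relation.EqvGen.setoid fun h h' => h' = G.iota h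

/-- The 1-cells of a 2-graph: edges `{h, ι h}` and external edges `{h}`. -/
def EdgeCell : Type := Quotient G.edgeSetoid

/-- Strand sections modulo the pairings `σ₁` and `σ₂`: the chains of strand sections,
i.e. the (internal and external) faces of the 2-graph. -/
def faceSetoid : Setoid G.S :=
  Relation.EqvGen.setoid fun s s' => s' = G.s1 s ∨ s' = G.s2 s

/-- The 2-cells (faces) of a 2-graph. -/
def Face : Type := Quotient G.faceSetoid

/-- The cells of the complex `𝒫_G = V_G ∪ (E_G ∪ E^ext_G) ∪ F_G` associated with a
2-graph `G`. -/
inductive Cell (G : TwoGraph) : Type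
  | vertex (v : G.V) : Cell G
  | edge (e : G.EdgeCell) : Cell G
  | face (f : G.Face) : Cell G

/-- The dimension of a cell: `0` for vertices, `1` for (external) edges, `2` for
faces. -/
def Cell.dim : Cell G → ℕ
  | Cell.vertex _ => 0
  | Cell.edge _ => 1
  | Cell.face _ => 2

/-- The basic bounding relation on cells: `v < e` iff some half-edge `h ∈ e` has
`ν h = v`; `e < f` iff some `h ∈ e` and some strand section `s ∈ f` have `μ s = h`;
`v < f` iff `v < e < f` for some (external) edge `e`. -/
def cellLt : Cell G → Cell G → Prop
  | Cell.vertex v, Cell.edge e => ∃ h : G.H, Quotient.mk G.edgeSetoid h = e ∧ G.nu h = v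
  | Cell.edge e, Cell.face f => ∃ s : G.S,
      Quotient.mk G.edgeSetoid (G.mu s) = e ∧ Quotient.mk G.faceSetoid s = f
  | Cell.vertex v, Cell.face f => ∃ e : G.EdgeCell,
      (∃ h : G.H, Quotient.mk G.edgeSetoid h = e ∧ G.nu h = v) ∧
      (∃ s : G.S,
        Quotient.mk G.edgeSetoid (G.mu s) = e ∧ Quotient.mk G.faceSetoid s = f)
  | _, _ => False

/-- The partial order on cells generated by the bounding relation. -/
def cellLe : Cell G → Cell G → Prop := Relation.ReflTransGen (G.cellLt)

end TwoGraph


namespace TwoGraph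

lemma dim_lt_of_cellLt (G : TwoGraph) {c c' : Cell G} (h : G.cellLt c c') :
    Cell.dim G c < Cell.dim G c' := by
  cases c <;> cases c' <;> simp_all [cellLt, Cell.dim, -existsAndEq]

lemma dim_le_of_cellLe (G : TwoGraph) {c c' : Cell G} (h : G.cellLe c c') :
    Cell.dim G c ≤ Cell.dim G c' := by
  induction h with
  | refl => exact le_refl _
  | tail _ hlt ih => exact ih.trans (G.dim_lt_of_cellLt hlt).le

lemma eq_of_cellLe_of_dim_le (G : TwoGraph) {c c' : Cell G} (h : G.cellLe c c')
    (hd : Cell.dim G c' ≤ Cell.dim G c) : c = c' := by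
  rcases h.cases_head with heq | ⟨b, hb, hbc⟩
  · exact heq
  · exact absurd ((G.dim_lt_of_cellLt hb).trans_le (G.dim_le_of_cellLe hbc)) (by omega)

end TwoGraph

/-- **2-graphs are pure complexes** (Prop. 2.9 of the paper, first part).
For any 2-graph `G`, the bounding relation on the cell set
`𝒫_G = V_G ∪ (E_G ∪ E^ext_G) ∪ F_G` generates a partial order which satisfies the
complex property (CP): whenever `c > c''` with `dim c − dim c'' > 1` there is a cell
`c'` with `c > c' > c''`.  Moreover the complex is pure: every cell of nonzero dimension
has a 0-cell below it. -/
theorem TwoGraph.cell_complex_partialOrder_CP_pure (G : TwoGraph) :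
    IsPartialOrder (TwoGraph.Cell G) (G.cellLe) ∧
    (∀ c c'' : TwoGraph.Cell G, G.cellLe c'' c → c'' ≠ c →
      TwoGraph.Cell.dim G c'' + 1 < TwoGraph.Cell.dim G c →
      ∃ c' : TwoGraph.Cell G,
        (G.cellLe c'' c' ∧ c'' ≠ c') ∧ (G.cellLe c' c ∧ c' ≠ c)) ∧
    (∀ c : TwoGraph.Cell G, 0 < TwoGraph.Cell.dim G c →
      ∃ c₀ : TwoGraph.Cell G, TwoGraph.Cell.dim G c₀ = 0 ∧ G.cellLe c₀ c ∧ c₀ ≠ c) := by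
  constructor
  · exact { refl := fun _ => Relation.ReflTransGen.refl
            trans := fun _ _ _ => Relation.ReflTransGen.trans
            antisymm := fun a b h1 h2 =>
              G.eq_of_cellLe_of_dim_le h1 (G.dim_le_of_cellLe h2) }
  constructor
  · intro c c'' h hne hdim
    cases c'' with
    | edge e => cases c <;> simp [Cell.dim] at hdim
    | face f => cases c <;> simp [Cell.dim] at hdim
    | vertex v =>
      cases c with
      | vertex w => simp [Cell.dim] at hdim
      | edge e => simp [Cell.dim] at hdim
      | face f =>
        rcases h.cases_head with heq | ⟨b, hb, hbc⟩
        · exact (nomatch heq)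
        · cases b with
          | vertex v' => exact hb.elim
          | edge e =>
            exact ⟨Cell.edge e, ⟨Relation.ReflTransGen.single hb,
              fun h => nomatch h⟩, hbc, fun h => nomatch h⟩
          | face f' =>
            have : (Cell.face f' : Cell G) = Cell.face f :=
              G.eq_of_cellLe_of_dim_le hbc (le_refl _)
            rw [this] at hb
            obtain ⟨e, hve, hef⟩ := hb
            exact ⟨Cell.edge e,
              ⟨Relation.ReflTransGen.single (show G.cellLt (.vertex v) (.edge e) from hve),
                fun h => nomatch h⟩,
              Relation.ReflTransGen.single (show G.cellLt (.edge e) (.face f) from hef),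
              fun h => nomatch h⟩
  · intro c hc
    cases c with
    | vertex v => simp [Cell.dim] at hc
    | edge e =>
      obtain ⟨h, rfl⟩ := Quotient.exists_rep e
      exact ⟨Cell.vertex (G.nu h), rfl,
        Relation.ReflTransGen.single
          (show G.cellLt (.vertex (G.nu h)) (.edge (Quotient.mk G.edgeSetoid h)) from
            ⟨h, rfl, rfl⟩),
        fun h => nomatch h⟩
    | face f =>
      obtain ⟨s, rfl⟩ := Quotient.exists_rep f
      exact ⟨Cell.vertex (G.nu (G.mu s)), rfl,
        Relation.ReflTransGen.single
          (show G.cellLt (.vertex (G.nu (G.mu s))) (.face (Quotient.mk G.faceSetoid s)) from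
            ⟨Quotient.mk G.edgeSetoid (G.mu s), ⟨G.mu s, rfl, rfl⟩, ⟨s, rfl, rfl⟩⟩),
        fun h => nomatch h⟩
end

section
/- Let G be a 2-graph in which the adjacency maps ν : H → V and μ : S → H are both surjective (no vertex has degree 0 and no half-edge has degree 0). Then the complex 𝒫_G = V_G ∪ (E_G ∪ E^ext_G) ∪ F_G is 2-dimensional: the maximal dimension of a cell is 2, and for every cell c of dimension 0 or 1 there exists a face f ∈ F_G with c < f. In particular, every strand section of G occurs in exactly one (internal or external) face. -/
/-- **2-graphs without trivial vertices or half-edges are 2-dimensional complexes**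
(Prop. 2.9 of the paper, second part).  If the adjacency maps `ν : H → V` and
`μ : S → H` of a 2-graph are surjective (no vertex and no half-edge of degree `0`),
then the complex `𝒫_G = V_G ∪ (E_G ∪ E^ext_G) ∪ F_G` is 2-dimensional: the maximal
dimension of a cell is `2` and every cell has a bounding face.  In particular every
strand section of `G` occurs in exactly one (internal or external) face. -/
theorem TwoGraph.cell_complex_two_dimensional (G : TwoGraph)
    (hnu : Function.Surjective G.nu) (hmu : Function.Surjective G.mu) :
    (∀ c : TwoGraph.Cell G, TwoGraph.Cell.dim G c ≤ 2) ∧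
    (∀ c : TwoGraph.Cell G, ∃ f : G.Face, G.cellLe c (TwoGraph.Cell.face f)) ∧
    (∀ c : TwoGraph.Cell G, TwoGraph.Cell.dim G c < 2 →
      ∃ f : G.Face, G.cellLe c (TwoGraph.Cell.face f) ∧ c ≠ TwoGraph.Cell.face f) ∧
    (∀ s : G.S, ∃! f : G.Face, Quotient.mk G.faceSetoid s = f) := by
  refine ⟨fun c => ?_, fun c => ?_, fun c hc => ?_, fun s => ⟨_, rfl, fun f hf => hf.symm⟩⟩
  · cases c <;> simp [TwoGraph.Cell.dim]
  · cases c with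
    | vertex v =>
      obtain ⟨h, hh⟩ := hnu v
      obtain ⟨s, hs⟩ := hmu h
      refine ⟨Quotient.mk G.faceSetoid s, ?_⟩
      refine Relation.ReflTransGen.head (b := TwoGraph.Cell.edge
        (Quotient.mk G.edgeSetoid (G.mu s))) ⟨G.mu s, rfl, by rw [hs, hh]⟩ ?_
      exact Relation.ReflTransGen.single ⟨s, rfl, rfl⟩
    | edge e =>
      induction e using Quotient.inductionOn with
      | h h =>
        obtain ⟨s, hs⟩ := hmu h
        exact ⟨Quotient.mk G.faceSetoid s,
          Relation.ReflTransGen.single ⟨s, by rw [hs], rfl⟩⟩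
    | face f => exact ⟨f, Relation.ReflTransGen.refl⟩
  · cases c with
    | vertex v =>
      obtain ⟨h, hh⟩ := hnu v
      obtain ⟨s, hs⟩ := hmu h
      refine ⟨Quotient.mk G.faceSetoid s, ?_, by simp⟩
      refine Relation.ReflTransGen.head (b := TwoGraph.Cell.edge
        (Quotient.mk G.edgeSetoid (G.mu s))) ⟨G.mu s, rfl, by rw [hs, hh]⟩ ?_
      exact Relation.ReflTransGen.single ⟨s, rfl, rfl⟩
    | edge e =>
      induction e using Quotient.inductionOn with
      | h h =>
        obtain ⟨s, hs⟩ := hmu h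
        exact ⟨Quotient.mk G.faceSetoid s,
          Relation.ReflTransGen.single ⟨s, by rw [hs], rfl⟩, by simp⟩
    | face f => simp [TwoGraph.Cell.dim] at hc
end

section
/- Let Γ be a 2-graph and Θ ⊑ Γ a subgraph. Then the contraction Γ/Θ — with vertex set the connected components of Θ, half-edges the external half-edges of Θ, strand sections the external strand sections of Θ, ν the composition of ν_Θ with the projection of vertices onto their component, μ the restriction of μ_Θ, edge set E_Γ \ E_Θ, edge-strand pairs S^e_Γ \ S^e_Θ, and vertex-strand pairing given by the pairs {s₁, s₂ₙ} of endpoint strand sections of the external faces (s₁, …, s₂ₙ) of Θ — satisfies all defining axioms of a 2-graph. In particular, the endpoint pairs of external faces of Θ form a complete partition of the external strand sections of Θ into two-element subsets, each adjacent to a single vertex of Γ/Θ. -/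
namespace TwoGraph

structure Subgraph (G : TwoGraph) where
  iota : G.H → G.H
  s2 : G.S → G.S
  iota_sub : ∀ h, iota h ≠ h → iota h = G.iota h
  s2_sub : ∀ s, s2 s ≠ s → s2 s = G.s2 s
  iota_invol : ∀ h, iota (iota h) = h
  s2_invol : ∀ s, s2 (s2 s) = s
  s2_edge : ∀ s, iota (G.mu s) = G.mu (s2 s)
  s2_fix : ∀ s, s2 s = s ↔ iota (G.mu s) = G.mu s

def Subgraph.toTwoGraph {G : TwoGraph} (T : G.Subgraph) : TwoGraph :=
  { G with
    iota := T.iota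
    s2 := T.s2
    iota_invol := T.iota_invol
    s2_invol := T.s2_invol
    s2_edge := T.s2_edge
    s2_fix := T.s2_fix }

def compRel (G : TwoGraph) : G.V → G.V → Prop :=
  fun v w => ∃ h, G.iota h ≠ h ∧ G.nu h = v ∧ G.nu (G.iota h) = w

def compSetoid (G : TwoGraph) : Setoid G.V := Relation.EqvGen.setoid G.compRel

def Components (G : TwoGraph) : Type := Quotient G.compSetoid

noncomputable instance (G : TwoGraph) : Fintype G.Components := by
  classical exact Quotient.fintype _

namespace Subgraph

open Classical

variable {G : TwoGraph} (T : G.Subgraph)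

/-- The `k`-th even element of the face chain starting at `s`: alternately apply `σ₁`
and the subgraph's `σ₂`, ending with `σ₁`. -/
def chain (k : ℕ) (s : G.S) : G.S := G.s1 ((T.s2 ∘ G.s1)^[k] s)

lemma exists_ext_chain (s : G.S) (hs : T.s2 s = s) :
    ∃ k, T.s2 (T.chain k s) = T.chain k s := by
  classical
  -- the walk through a face must return to an external strand section
  have hinj : Function.Injective (T.s2 ∘ G.s1) :=
    (Function.Involutive.injective T.s2_invol).comp
      (Function.Involutive.injective G.s1_invol)
  -- find a period
  have : ∃ m, 0 < m ∧ (T.s2 ∘ G.s1)^[m] s = s := by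
    have hni : ¬ Function.Injective
        (fun i : Fin (Fintype.card G.S + 1) => (T.s2 ∘ G.s1)^[(i : ℕ)] s) := by
      intro hi
      have := Fintype.card_le_of_injective _ hi
      rw [Fintype.card_fin] at this
      omega
    rw [Function.not_injective_iff] at hni
    obtain ⟨i, j, hij, hne⟩ := hni
    have hne' : (i : ℕ) ≠ (j : ℕ) := fun hh => hne (Fin.ext hh)
    rcases Nat.lt_or_ge (i : ℕ) (j : ℕ) with h | h
    · refine ⟨(j : ℕ) - i, by omega, ?_⟩
      have key : (T.s2 ∘ G.s1)^[(i : ℕ)] (((T.s2 ∘ G.s1)^[(j : ℕ) - i]) s)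
          = (T.s2 ∘ G.s1)^[(i : ℕ)] s := by
        rw [← Function.iterate_add_apply]
        have heq : (i : ℕ) + ((j : ℕ) - (i : ℕ)) = (j : ℕ) := by omega
        rw [heq, hij]
      exact hinj.iterate (i : ℕ) key
    · have h' : (j : ℕ) < (i : ℕ) := by omega
      refine ⟨(i : ℕ) - j, by omega, ?_⟩
      have key : (T.s2 ∘ G.s1)^[(j : ℕ)] (((T.s2 ∘ G.s1)^[(i : ℕ) - j]) s)
          = (T.s2 ∘ G.s1)^[(j : ℕ)] s := by
        rw [← Function.iterate_add_apply]
        have heq : (j : ℕ) + ((i : ℕ) - (j : ℕ)) = (i : ℕ) := by omega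
        rw [heq, ← hij]
      exact hinj.iterate (j : ℕ) key
  obtain ⟨m, hm, hper⟩ := this
  refine ⟨m - 1, ?_⟩
  have hc : T.s2 (T.chain (m - 1) s) = s := by
    unfold chain
    have : T.s2 (G.s1 ((T.s2 ∘ G.s1)^[m - 1] s)) = (T.s2 ∘ G.s1)^[m] s := by
      have hm1 : m = (m - 1) + 1 := by omega
      rw [hm1, Function.iterate_succ_apply']
      rfl
    rw [this, hper]
  have hcs : T.chain (m - 1) s = s := by
    have := congrArg T.s2 hc
    rw [T.s2_invol, hs] at this
    exact this
  rw [hc, hcs]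

/-- The endpoint of the external face of the subgraph starting at an external strand
section `s`: the first external strand section reached from `s` by alternately applying
`σ₁` and the subgraph's `σ₂`. -/
noncomputable def endpoint (s : G.S) : G.S :=
  if hs : T.s2 s = s then T.chain (Nat.find (T.exists_ext_chain s hs)) s else s

lemma endpoint_ext (s : G.S) (hs : T.s2 s = s) :
    T.s2 (T.endpoint s) = T.endpoint s := by
  unfold endpoint
  rw [dif_pos hs]
  exact Nat.find_spec (T.exists_ext_chain s hs)

end Subgraph

end TwoGraph

namespace TwoGraph

variable {G : TwoGraph}

/-- `FaceEndpoint T s t` says that `(s, …, t)` is an external face of the subgraph `T`: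
`t` is the first `σ₂`-external strand section reached from the external strand section
`s` by applying `σ₁` and the subgraph's `σ₂` alternately. -/
def FaceEndpoint (T : G.Subgraph) (s t : G.S) : Prop :=
  T.s2 s = s ∧ T.s2 t = t ∧
    ∃ k : ℕ, t = T.chain k s ∧ ∀ j < k, T.s2 (T.chain j s) ≠ T.chain j s

/-! ### Auxiliary lemmas for the contraction theorem -/

open Classical

lemma aux_reverse (T : G.Subgraph) (s : G.S) (k : ℕ) :
    ∀ j ≤ k, (T.s2 ∘ G.s1)^[j] (T.chain k s) = G.s1 ((T.s2 ∘ G.s1)^[k - j] s) := by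
  intro j
  induction j with
  | zero => intro _; simp [Subgraph.chain]
  | succ j ih =>
    intro hj
    have hj' : j ≤ k := Nat.le_of_succ_le hj
    rw [Function.iterate_succ_apply', ih hj']
    have hk : k - j = (k - (j + 1)) + 1 := by omega
    rw [hk, Function.iterate_succ_apply']
    simp [Function.comp, G.s1_invol, T.s2_invol]

lemma chain_reverse (T : G.Subgraph) (s : G.S) (k j : ℕ) (hj : j ≤ k) :
    T.chain j (T.chain k s) = (T.s2 ∘ G.s1)^[k - j] s := by
  have h0 : T.chain j (T.chain k s) = G.s1 ((T.s2 ∘ G.s1)^[j] (T.chain k s)) := rfl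
  rw [h0, aux_reverse T s k j hj, G.s1_invol]

lemma iter_eq_s2_chain (T : G.Subgraph) (s : G.S) (i : ℕ) (hi : 1 ≤ i) :
    (T.s2 ∘ G.s1)^[i] s = T.s2 (T.chain (i - 1) s) := by
  have h : i = (i - 1) + 1 := by omega
  rw [h, Function.iterate_succ_apply']
  rfl

lemma notfix_iter (T : G.Subgraph) (s : G.S) (k : ℕ)
    (hmin : ∀ j < k, T.s2 (T.chain j s) ≠ T.chain j s)
    (i : ℕ) (h1 : 1 ≤ i) (h2 : i ≤ k) :
    T.s2 ((T.s2 ∘ G.s1)^[i] s) ≠ (T.s2 ∘ G.s1)^[i] s := by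
  rw [iter_eq_s2_chain T s i h1, T.s2_invol]
  intro hc
  exact hmin (i - 1) (by omega) hc.symm

lemma endpoint_spec (T : G.Subgraph) (s : G.S) (hs : T.s2 s = s) :
    T.endpoint s = T.chain (Nat.find (T.exists_ext_chain s hs)) s := by
  unfold Subgraph.endpoint
  rw [dif_pos hs]

lemma endpoint_face (T : G.Subgraph) (s : G.S) (hs : T.s2 s = s) :
    FaceEndpoint T s (T.endpoint s) :=
  ⟨hs, T.endpoint_ext s hs, Nat.find (T.exists_ext_chain s hs),
    endpoint_spec T s hs, fun j hj => Nat.find_min (T.exists_ext_chain s hs) hj⟩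

lemma endpoint_eq_of (T : G.Subgraph) (s : G.S) (k : ℕ) (hs : T.s2 s = s)
    (ht : T.s2 (T.chain k s) = T.chain k s)
    (hmin : ∀ j < k, T.s2 (T.chain j s) ≠ T.chain j s) :
    T.endpoint s = T.chain k s := by
  rw [endpoint_spec T s hs]
  have hfind : Nat.find (T.exists_ext_chain s hs) = k :=
    le_antisymm (Nat.find_le ht)
      ((Nat.le_find_iff _ _).mpr fun j hj => hmin j hj)
  rw [hfind]

lemma endpoint_endpoint (T : G.Subgraph) (s : G.S) (hs : T.s2 s = s) :
    T.endpoint (T.endpoint s) = s := by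
  set k := Nat.find (T.exists_ext_chain s hs) with hk
  have heq : T.endpoint s = T.chain k s := endpoint_spec T s hs
  have ht : T.s2 (T.chain k s) = T.chain k s := by
    rw [← heq]; exact T.endpoint_ext s hs
  have hmin : ∀ j < k, T.s2 (T.chain j s) ≠ T.chain j s :=
    fun j hj => Nat.find_min (T.exists_ext_chain s hs) hj
  rw [heq]
  have h1 : T.chain k (T.chain k s) = s := by
    rw [chain_reverse T s k k le_rfl]; simp
  have h2 : ∀ j < k, T.s2 (T.chain j (T.chain k s)) ≠ T.chain j (T.chain k s) := by
    intro j hj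
    rw [chain_reverse T s k j (le_of_lt hj)]
    exact notfix_iter T s k hmin (k - j) (by omega) (by omega)
  rw [endpoint_eq_of T (T.chain k s) k ht (by rw [h1]; exact hs) h2, h1]

lemma endpoint_ne (T : G.Subgraph) (s : G.S) (hs : T.s2 s = s) :
    T.endpoint s ≠ s := by
  set k := Nat.find (T.exists_ext_chain s hs) with hk
  have hmin : ∀ j < k, T.s2 (T.chain j s) ≠ T.chain j s :=
    fun j hj => Nat.find_min (T.exists_ext_chain s hs) hj
  rw [endpoint_spec T s hs, ← hk]
  intro hcon
  rcases Nat.eq_zero_or_pos k with h0 | hpos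
  · rw [h0] at hcon
    have : T.chain 0 s = G.s1 s := by simp [Subgraph.chain]
    rw [this] at hcon
    exact G.s1_nofix s hcon
  · have hrev : ∀ j ≤ k, (T.s2 ∘ G.s1)^[j] s = G.s1 ((T.s2 ∘ G.s1)^[k - j] s) := by
      intro j hj
      have := aux_reverse T s k j hj
      rwa [hcon] at this
    rcases Nat.even_or_odd k with he | ho
    · obtain ⟨m, hm⟩ := he
      have hmk : m ≤ k := by omega
      have := hrev m hmk
      have hkm : k - m = m := by omega
      rw [hkm] at this
      exact G.s1_nofix ((T.s2 ∘ G.s1)^[m] s) this.symm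
    · obtain ⟨m, hm⟩ := ho
      have hj : m + 1 ≤ k := by omega
      have h1 := hrev (m + 1) hj
      have hkm : k - (m + 1) = m := by omega
      rw [hkm] at h1
      have h2 : (T.s2 ∘ G.s1)^[m + 1] s = T.s2 (G.s1 ((T.s2 ∘ G.s1)^[m] s)) := by
        rw [Function.iterate_succ_apply']; rfl
      have hfix : T.s2 (T.chain m s) = T.chain m s := by
        have : T.s2 (G.s1 ((T.s2 ∘ G.s1)^[m] s)) = G.s1 ((T.s2 ∘ G.s1)^[m] s) := by
          rw [← h2, h1]
        exact this
      exact hmin m (by omega) hfix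

lemma quot_s2 (T : G.Subgraph) (x : G.S) :
    Quotient.mk T.toTwoGraph.compSetoid (G.nu (G.mu (T.s2 x)))
      = Quotient.mk T.toTwoGraph.compSetoid (G.nu (G.mu x)) := by
  by_cases hx : T.s2 x = x
  · rw [hx]
  · apply Quotient.sound
    apply Relation.EqvGen.symm
    apply Relation.EqvGen.rel
    refine ⟨G.mu x, ?_, rfl, ?_⟩
    · intro hc
      exact hx ((T.s2_fix x).mpr hc)
    · show G.nu (T.iota (G.mu x)) = G.nu (G.mu (T.s2 x))
      rw [T.s2_edge]

lemma quot_iter (T : G.Subgraph) (s : G.S) (j : ℕ) :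
    Quotient.mk T.toTwoGraph.compSetoid (G.nu (G.mu ((T.s2 ∘ G.s1)^[j] s)))
      = Quotient.mk T.toTwoGraph.compSetoid (G.nu (G.mu s)) := by
  induction j with
  | zero => rfl
  | succ j ih =>
    rw [Function.iterate_succ_apply']
    show Quotient.mk T.toTwoGraph.compSetoid
        (G.nu (G.mu (T.s2 (G.s1 ((T.s2 ∘ G.s1)^[j] s))))) = _
    rw [quot_s2 T (G.s1 ((T.s2 ∘ G.s1)^[j] s)), G.s1_adj]
    exact ih

lemma quot_endpoint (T : G.Subgraph) (s : G.S) (hs : T.s2 s = s) :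
    Quotient.mk T.toTwoGraph.compSetoid (G.nu (G.mu (T.endpoint s)))
      = Quotient.mk T.toTwoGraph.compSetoid (G.nu (G.mu s)) := by
  rw [endpoint_spec T s hs]
  show Quotient.mk T.toTwoGraph.compSetoid
      (G.nu (G.mu (G.s1 ((T.s2 ∘ G.s1)^[Nat.find (T.exists_ext_chain s hs)] s)))) = _
  rw [G.s1_adj]
  exact quot_iter T s _

/-- **The contraction of a subgraph of a 2-graph is a 2-graph** (Def. 3.2 of the paper is
well posed).  For a subgraph `Θ ⊑ Γ`, the contraction data — vertices the connected
components of `Θ`, half-edges and strand sections the external ones of `Θ`, adjacency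
maps induced by `Γ`, edges `E_Γ \ E_Θ` with their strand pairs, and vertex-strand
pairing given by the endpoint pairs `{s₁, s₂ₙ}` of the external faces of `Θ` — satisfies
all the defining axioms of a 2-graph.  In particular the endpoint pairs of the external
faces of `Θ` form a complete partition of the external strand sections into two-element
subsets, each adjacent to a single vertex (component) of `Γ/Θ`. -/
theorem contraction_isTwoGraph (T : G.Subgraph) :
    -- the remaining edges and strand pairs restrict to the external structure of `Θ`
    (∀ s : G.S, T.s2 s = s → T.iota (G.mu s) = G.mu s) ∧
    (∀ h : G.H, T.iota h = h → T.iota (G.iota h) = G.iota h) ∧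
    (∀ s : G.S, T.s2 s = s → T.s2 (G.s2 s) = G.s2 s) ∧
    -- they again satisfy the axioms (4a), (8a) of a 2-graph
    (∀ h : {h : G.H // T.iota h = h}, G.iota (G.iota h.1) = h.1) ∧
    (∀ s : {s : G.S // T.s2 s = s}, G.s2 (G.s2 s.1) = s.1) ∧
    (∀ s : {s : G.S // T.s2 s = s}, G.iota (G.mu s.1) = G.mu (G.s2 s.1)) ∧
    (∀ s : {s : G.S // T.s2 s = s}, G.s2 s.1 = s.1 ↔ G.iota (G.mu s.1) = G.mu s.1) ∧
    -- and the endpoint pairing of external faces is a fixed-point-free involution on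
    -- the external strand sections, pairing strand sections at a common vertex
    -- (connected component of `Θ`), i.e. it satisfies axiom (7a)
    ∃ s1' : {s : G.S // T.s2 s = s} → {s : G.S // T.s2 s = s},
      (∀ s, FaceEndpoint T s.1 (s1' s).1) ∧
      (∀ s, s1' (s1' s) = s) ∧
      (∀ s, s1' s ≠ s) ∧
      (∀ s, (Quotient.mk T.toTwoGraph.compSetoid (G.nu (G.mu (s1' s).1)))
        = Quotient.mk T.toTwoGraph.compSetoid (G.nu (G.mu s.1))) := by
  classical
  refine ⟨fun s hs => (T.s2_fix s).mp hs, ?_, ?_, fun h => G.iota_invol _,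
    fun s => G.s2_invol _, fun s => G.s2_edge _, fun s => G.s2_fix _, ?_⟩
  · intro h hh
    by_contra hne
    have h2 : T.iota (G.iota h) = G.iota (G.iota h) := T.iota_sub (G.iota h) hne
    rw [G.iota_invol] at h2
    have h3 := congrArg T.iota h2
    rw [T.iota_invol, hh] at h3
    exact hne (by rw [h3]; exact hh)
  · intro s hs
    by_contra hne
    have h2 : T.s2 (G.s2 s) = G.s2 (G.s2 s) := T.s2_sub (G.s2 s) hne
    rw [G.s2_invol] at h2
    have h3 := congrArg T.s2 h2
    rw [T.s2_invol, hs] at h3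
    exact hne (by rw [h3]; exact hs)
  · refine ⟨fun s => ⟨T.endpoint s.1, T.endpoint_ext s.1 s.2⟩, ?_, ?_, ?_, ?_⟩
    · intro s
      exact endpoint_face T s.1 s.2
    · intro s
      exact Subtype.ext (endpoint_endpoint T s.1 s.2)
    · intro s hcon
      exact endpoint_ne T s.1 s.2 (congrArg Subtype.val hcon)
    · intro s
      exact quot_endpoint T s.1 s.2

end TwoGraph
end
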